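/- Let φ : H → H be holomorphic with finite angular derivative 0 < λ < ∞ at infinity. Define Kⁿ(w,z) = ((φ(z) + conj(φ(w)))ⁿ − λ⁻ⁿ(z + conj(w))ⁿ)/(z + conj(w))ⁿ. Then for every natural number n ≥ 0, the kernel K^{2ⁿ} is positive on H × H. -/

import Mathlib

noncomputable section
open MeasureTheory Complex Set Filter Topology

/-- The right half-plane. -/
def Hs : Set ℂ := {z | 0 < z.re}

/-- A kernel `K` on `H × H` is positive if all finite quadratic forms
`∑ cᵢ conj(cⱼ) K(xᵢ, xⱼ)` are nonnegative (real). -/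
def PosKernel (K : ℂ → ℂ → ℂ) : Prop :=
  ∀ (n : ℕ) (c : Fin n → ℂ) (x : Fin n → ℂ), (∀ i, x i ∈ Hs) →
    0 ≤ (∑ i, ∑ j, c i * (starRingEnd ℂ) (c j) * K (x i) (x j)).re ∧
    (∑ i, ∑ j, c i * (starRingEnd ℂ) (c j) * K (x i) (x j)).im = 0

/-- The kernel `Kⁿ(w,z) = ((φ(z)+conj(φ(w)))ⁿ − λ⁻ⁿ(z+conj(w))ⁿ)/(z+conj(w))ⁿ`. -/
def Kn (φ : ℂ → ℂ) (lam : ℝ) (m : ℕ) (w z : ℂ) : ℂ :=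
  ((φ z + (starRingEnd ℂ) (φ w))^m - ((lam : ℂ)^m)⁻¹ * (z + (starRingEnd ℂ) w)^m)
    / (z + (starRingEnd ℂ) w)^m

open scoped ComplexOrder
open Matrix Metric Real ComplexConjugate

/-!
Since `K^(2m) = K^m ⊙ K^m + 2λ^(-m) K^m` entrywise, the Schur product theorem reduces everything
to `K¹`. Now `K¹(w, z) = (ψ z + conj (ψ w)) / (z + conj w)` with `ψ z = φ z - z / λ`, and
`Re ψ ≥ 0` because `λ` bounds `Re z / Re φ(z)`. The Cayley transform `z ↦ (z - 1) / (z + 1)`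
turns this kernel into a diagonal rescaling of the Pick kernel
`(1 - F z * conj (F w)) / (1 - z * conj w)` of a holomorphic map `F` from the unit disc to the
closed unit disc. For a dilate `G = F (r ·)`, `r < 1`, which is continuous up to the unit circle,
the Pick form at points `aᵢ` with coefficients `vᵢ` equals `‖g‖² - ‖h‖²` in `L²` of the circle,
where `g = ∑ conj vᵢ k_{aᵢ}` is a combination of Szegő kernels and `h` is the image of `g` under
the adjoint of multiplication by `G`. The reproducing property gives
`‖h‖² = Re ⟪G h, g⟫ ≤ (‖h‖² + ‖g‖²) / 2`, so the form is nonnegative. Finally let `r → 1`.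
-/

theorem Matrix.isHermitian_of_forall_dotProduct_mulVec_nonneg {n : Type*} [Fintype n]
    {M : Matrix n n ℂ} (hM : ∀ v, 0 ≤ star v ⬝ᵥ (M *ᵥ v)) : M.IsHermitian := by
  classical
  rw [← Matrix.isSymmetric_toEuclideanLin_iff, LinearMap.isSymmetric_iff_inner_map_self_real]
  intro v
  rw [Complex.conj_eq_iff_im, EuclideanSpace.inner_eq_star_dotProduct, dotProduct_star]
  simpa [dotProduct_comm] using (Complex.nonneg_iff.mp (hM v.ofLp)).2.symm

theorem Matrix.posSemidef_iff_forall_dotProduct_mulVec_nonneg {n : Type*} [Fintype n]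
    {M : Matrix n n ℂ} : M.PosSemidef ↔ ∀ v, 0 ≤ star v ⬝ᵥ (M *ᵥ v) :=
  ⟨fun h => h.dotProduct_mulVec_nonneg, fun h =>
    .of_dotProduct_mulVec_nonneg (Matrix.isHermitian_of_forall_dotProduct_mulVec_nonneg h) h⟩

theorem Matrix.dotProduct_mulVec_star_eq_sum {n : Type*} [Fintype n] (M : Matrix n n ℂ)
    (c : n → ℂ) : c ⬝ᵥ (M *ᵥ star c) = ∑ i, ∑ j, c i * conj (c j) * M i j := by
  simp only [dotProduct, mulVec, Finset.mul_sum]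
  exact Finset.sum_congr rfl fun i _ => Finset.sum_congr rfl fun j _ => by
    simp only [Pi.star_apply, RCLike.star_def]; ring

theorem posKernel_iff_posSemidef {K : ℂ → ℂ → ℂ} :
    PosKernel K ↔ ∀ (n : ℕ) (x : Fin n → ℂ), (∀ i, x i ∈ Hs) →
      (Matrix.of fun i j => K (x i) (x j)).PosSemidef := by
  have form (n : ℕ) (c x : Fin n → ℂ) :
      ∑ i, ∑ j, c i * conj (c j) * K (x i) (x j)
        = c ⬝ᵥ ((Matrix.of fun i j => K (x i) (x j)) *ᵥ star c) :=
    (Matrix.dotProduct_mulVec_star_eq_sum _ c).symm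
  simp only [PosKernel, Matrix.posSemidef_iff_forall_dotProduct_mulVec_nonneg, form,
    Complex.nonneg_iff, eq_comm (a := (0 : ℝ))]
  exact forall_congr' fun n => ⟨fun h x hx v => by simpa using h (star v) x hx,
    fun h c x hx => by simpa using h x hx (star c)⟩

namespace PosKernel

variable {K L : ℂ → ℂ → ℂ}

theorem add (hK : PosKernel K) (hL : PosKernel L) : PosKernel (fun w z => K w z + L w z) := by
  rw [posKernel_iff_posSemidef] at hK hL ⊢
  exact fun n x hx => (hK n x hx).add (hL n x hx)

theorem mul (hK : PosKernel K) (hL : PosKernel L) : PosKernel (fun w z => K w z * L w z) := by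
  rw [posKernel_iff_posSemidef] at hK hL ⊢
  exact fun n x hx => (hK n x hx).hadamard (hL n x hx)

theorem const_mul (hK : PosKernel K) {c : ℂ} (hc : 0 ≤ c) : PosKernel (fun w z => c * K w z) := by
  rw [posKernel_iff_posSemidef] at hK ⊢
  exact fun n x hx => (hK n x hx).smul hc

end PosKernel

theorem DiffContOnCl.continuousOn_unitCircle {f : ℂ → ℂ} (hf : DiffContOnCl ℂ f (ball 0 1)) :
    ContinuousOn f (sphere 0 |1|) := by
  rw [abs_one]
  exact hf.continuousOn_ball.mono sphere_subset_closedBall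

theorem one_sub_mul_ne_zero_of_norm_lt {u v : ℂ} (hu : ‖u‖ < 1) (hv : ‖v‖ ≤ 1) : 1 - u * v ≠ 0 := by
  intro h
  have huv : ‖u * v‖ < 1 := by
    rw [norm_mul]; nlinarith [norm_nonneg u, norm_nonneg v]
  rw [← sub_eq_zero.mp h, norm_one] at huv
  exact lt_irrefl _ huv

def szegoKernel (a z : ℂ) : ℂ := (1 - conj a * z)⁻¹

theorem differentiableOn_szegoKernel {a : ℂ} (ha : a ∈ ball (0 : ℂ) 1) :
    DifferentiableOn ℂ (szegoKernel a) (closedBall 0 1) := by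
  intro z hz
  refine ((differentiableAt_id.const_mul _).const_sub _).inv ?_ |>.differentiableWithinAt
  exact one_sub_mul_ne_zero_of_norm_lt (by simpa using ha) (by simpa using hz)

theorem circleAverage_mul_conj_szegoKernel {q : ℂ → ℂ} (hq : DiffContOnCl ℂ q (ball 0 1))
    {a : ℂ} (ha : a ∈ ball (0 : ℂ) 1) :
    circleAverage (fun z => q z * conj (szegoKernel a z)) 0 1 = q a := by
  rw [← abs_one] at hq ha
  rw [← hq.circleAverage_smul_div ha]
  refine circleAverage_congr_sphere fun z hz => ?_
  have hz1 : ‖z‖ = 1 := by simpa using hz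
  have hzz : z * conj z = 1 := by
    rw [Complex.mul_conj, Complex.normSq_eq_norm_sq, hz1]; norm_num
  have hza : z - a ≠ 0 := sub_ne_zero.mpr <| by rintro rfl; simp [hz1] at ha
  have hz0 : z ≠ 0 := by rintro rfl; simp at hz1
  have key : conj (1 - conj a * z) = (z - a) * conj z := by
    simp only [map_sub, map_one, map_mul, Complex.conj_conj]; linear_combination -hzz
  simp only [szegoKernel, map_inv₀, key, smul_eq_mul, sub_zero]
  have hcz : conj z ≠ 0 := by simpa using hz0
  field_simp
  rw [mul_assoc, hzz, mul_one]

theorem circleAverage_mul_conj_sum_szegoKernel {ι : Type*} [Fintype ι] {q : ℂ → ℂ}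
    (hq : DiffContOnCl ℂ q (ball 0 1)) (t a : ι → ℂ) (ha : ∀ i, a i ∈ ball (0 : ℂ) 1) :
    circleAverage (fun z => q z * conj (∑ i, t i * szegoKernel (a i) z)) 0 1
      = ∑ i, conj (t i) * q (a i) := by
  have hint : ∀ i ∈ Finset.univ, CircleIntegrable
      (fun z => conj (t i) * (q z * conj (szegoKernel (a i) z))) 0 1 := fun i _ =>
    ContinuousOn.circleIntegrable' <| continuousOn_const.mul <|
      hq.continuousOn_unitCircle.mul <| Complex.continuous_conj.comp_continuousOn <|
        ((differentiableOn_szegoKernel (ha i)).diffContOnCl_ball subset_rfl).continuousOn_unitCircle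
  simp only [map_sum, map_mul, Finset.mul_sum, mul_left_comm (q _)]
  rw [circleAverage_fun_sum hint]
  refine Finset.sum_congr rfl fun i _ => ?_
  simp_rw [← smul_eq_mul (conj (t i))]
  rw [circleAverage_fun_smul, circleAverage_mul_conj_szegoKernel hq (ha i)]

theorem re_mul_conj_le_normSq_add_normSq (m u v : ℂ) (hm : ‖m‖ ≤ 1) :
    2 * (m * u * conj v).re ≤ Complex.normSq u + Complex.normSq v := by
  have h1 : (m * u * conj v).re ≤ ‖u‖ * ‖v‖ :=
    calc (m * u * conj v).re ≤ ‖m * u * conj v‖ := Complex.re_le_norm _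
      _ = ‖m‖ * (‖u‖ * ‖v‖) := by rw [norm_mul, norm_mul, Complex.norm_conj, mul_assoc]
      _ ≤ ‖u‖ * ‖v‖ := mul_le_of_le_one_left (by positivity) hm
  rw [← Complex.sq_norm, ← Complex.sq_norm]
  nlinarith [sq_nonneg (‖u‖ - ‖v‖)]

section CircleAverage

variable {c : ℂ} {R : ℝ}

theorem re_circleAverage {f : ℂ → ℂ} (hf : CircleIntegrable f c R) :
    (circleAverage f c R).re = circleAverage (fun z => (f z).re) c R :=
  (Complex.reCLM.circleAverage_comp_comm hf).symm

theorem circleAverage_ofReal {f : ℂ → ℝ} (hf : CircleIntegrable f c R) :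
    circleAverage (fun z => (f z : ℂ)) c R = circleAverage f c R :=
  Complex.ofRealCLM.circleAverage_comp_comm hf

theorem circleAverage_mul_conj_self {f : ℂ → ℂ} (hf : ContinuousOn f (sphere c |R|)) :
    circleAverage (fun z => f z * conj (f z)) c R
      = ((circleAverage (fun z => Complex.normSq (f z)) c R : ℝ) : ℂ) := by
  rw [← circleAverage_ofReal (f := fun z => Complex.normSq (f z))
    (Complex.continuous_normSq.comp_continuousOn hf).circleIntegrable']
  simp only [Complex.mul_conj]

theorem circleAverage_normSq_le_of_circleAverage_mul_conj_eq {m u v : ℂ → ℂ}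
    (hm : ContinuousOn m (sphere c |R|)) (hu : ContinuousOn u (sphere c |R|))
    (hv : ContinuousOn v (sphere c |R|)) (hm1 : ∀ z ∈ sphere c |R|, ‖m z‖ ≤ 1)
    (h : circleAverage (fun z => u z * conj (u z)) c R
      = circleAverage (fun z => m z * u z * conj (v z)) c R) :
    circleAverage (fun z => Complex.normSq (u z)) c R
      ≤ circleAverage (fun z => Complex.normSq (v z)) c R := by
  have hmuv : ContinuousOn (fun z => m z * u z * conj (v z)) (sphere c |R|) :=
    (hm.mul hu).mul (Complex.continuous_conj.comp_continuousOn hv)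
  have hnormSq {f : ℂ → ℂ} (hf : ContinuousOn f (sphere c |R|)) :
      CircleIntegrable (fun z => Complex.normSq (f z)) c R :=
    (Complex.continuous_normSq.comp_continuousOn hf).circleIntegrable'
  have hu_eq : circleAverage (fun z => Complex.normSq (u z)) c R
      = circleAverage (fun z => (m z * u z * conj (v z)).re) c R := by
    rw [← re_circleAverage hmuv.circleIntegrable', ← h, circleAverage_mul_conj_self hu,
      Complex.ofReal_re]
  have hmono : circleAverage (fun z => (2 : ℝ) • (m z * u z * conj (v z)).re) c R
      ≤ circleAverage (fun z => Complex.normSq (u z) + Complex.normSq (v z)) c R :=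
    circleAverage_mono
      ((Complex.continuous_re.comp_continuousOn hmuv).const_smul (2 : ℝ)).circleIntegrable'
      ((hnormSq hu).add (hnormSq hv))
      fun z hz => re_mul_conj_le_normSq_add_normSq _ _ _ (hm1 z hz)
  rw [circleAverage_fun_smul, circleAverage_fun_add (hnormSq hu) (hnormSq hv), ← hu_eq,
    smul_eq_mul] at hmono
  linarith

end CircleAverage

def pickKernel (F : ℂ → ℂ) (w z : ℂ) : ℂ := (1 - F z * conj (F w)) / (1 - z * conj w)

theorem diffContOnCl_sum_szegoKernel {ι : Type*} [Fintype ι] (t a : ι → ℂ)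
    (ha : ∀ i, a i ∈ ball (0 : ℂ) 1) :
    DiffContOnCl ℂ (fun z => ∑ i, t i * szegoKernel (a i) z) (ball 0 1) :=
  (DifferentiableOn.fun_sum fun i _ => (differentiableOn_szegoKernel (ha i)).const_mul (t i))
    |>.diffContOnCl_ball subset_rfl

theorem posSemidef_pickKernel_of_diffContOnCl {ι : Type*} [Fintype ι] {G : ℂ → ℂ}
    (hG : DiffContOnCl ℂ G (ball 0 1)) (hG1 : ∀ z ∈ sphere (0 : ℂ) 1, ‖G z‖ ≤ 1)
    (a : ι → ℂ) (ha : ∀ i, a i ∈ ball (0 : ℂ) 1) :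
    (Matrix.of fun i j => pickKernel G (a i) (a j)).PosSemidef := by
  rw [Matrix.posSemidef_iff_forall_dotProduct_mulVec_nonneg]
  intro v
  set g := fun z => ∑ i, conj (v i) * szegoKernel (a i) z with hg_def
  set h := fun z => ∑ i, conj (v i * G (a i)) * szegoKernel (a i) z with hh_def
  have hg : DiffContOnCl ℂ g (ball 0 1) := diffContOnCl_sum_szegoKernel _ a ha
  have hh : DiffContOnCl ℂ h (ball 0 1) := diffContOnCl_sum_szegoKernel _ a ha
  -- `h` is the adjoint of multiplication by `G` applied to `g`, so `⟪h, h⟫ = ⟪G h, g⟫`.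
  have hgg : circleAverage (fun z => g z * conj (g z)) 0 1 = ∑ i, v i * g (a i) :=
    (circleAverage_mul_conj_sum_szegoKernel hg (fun i => conj (v i)) a ha).trans
      (by simp only [Complex.conj_conj])
  have hhh : circleAverage (fun z => h z * conj (h z)) 0 1 = ∑ i, v i * G (a i) * h (a i) :=
    (circleAverage_mul_conj_sum_szegoKernel hh (fun i => conj (v i * G (a i))) a ha).trans
      (by simp only [Complex.conj_conj])
  have hhg : circleAverage (fun z => G z * h z * conj (g z)) 0 1
      = ∑ i, v i * G (a i) * h (a i) := by
    have hGh : DiffContOnCl ℂ (fun z => G z * h z) (ball 0 1) := hG.smul hh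
    exact (circleAverage_mul_conj_sum_szegoKernel hGh (fun i => conj (v i)) a ha).trans
      (by simp only [Complex.conj_conj, mul_assoc])
  have hform : star v ⬝ᵥ ((Matrix.of fun i j => pickKernel G (a i) (a j)) *ᵥ v)
      = ∑ i, v i * g (a i) - ∑ i, v i * G (a i) * h (a i) := by
    simp only [dotProduct, mulVec, Matrix.of_apply, pickKernel, szegoKernel, hg_def, hh_def,
      Finset.mul_sum, ← Finset.sum_sub_distrib]
    rw [Finset.sum_comm]
    refine Finset.sum_congr rfl fun j _ => Finset.sum_congr rfl fun i _ => ?_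
    simp only [Pi.star_apply, RCLike.star_def, map_mul]
    ring
  have hle := circleAverage_normSq_le_of_circleAverage_mul_conj_eq hG.continuousOn_unitCircle
    hh.continuousOn_unitCircle hg.continuousOn_unitCircle (by simpa using hG1) (hhh.trans hhg.symm)
  rw [hform, ← hgg, ← hhh, circleAverage_mul_conj_self hg.continuousOn_unitCircle,
    circleAverage_mul_conj_self hh.continuousOn_unitCircle, ← Complex.ofReal_sub,
    Complex.zero_le_real, sub_nonneg]
  exact hle

theorem posSemidef_pickKernel {ι : Type*} [Fintype ι] {F : ℂ → ℂ}
    (hF : DifferentiableOn ℂ F (ball 0 1)) (hF1 : ∀ z ∈ ball (0 : ℂ) 1, ‖F z‖ ≤ 1)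
    (a : ι → ℂ) (ha : ∀ i, a i ∈ ball (0 : ℂ) 1) :
    (Matrix.of fun i j => pickKernel F (a i) (a j)).PosSemidef := by
  rw [Matrix.posSemidef_iff_forall_dotProduct_mulVec_nonneg]
  intro v
  set Q : Matrix ι ι ℂ → ℂ := fun M => star v ⬝ᵥ (M *ᵥ v)
  have hdilate : ∀ r ∈ Ioo (0 : ℝ) 1,
      0 ≤ Q (Matrix.of fun i j => pickKernel (fun z => F (r * z)) (a i) (a j)) := by
    rintro r ⟨hr0, hr1⟩
    have hmaps : MapsTo (fun z : ℂ => (r : ℂ) * z) (closedBall 0 1) (ball 0 1) := by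
      intro z hz
      rw [mem_closedBall_zero_iff] at hz
      rw [mem_ball_zero_iff, norm_mul, Complex.norm_real, Real.norm_of_nonneg hr0.le]
      nlinarith [norm_nonneg z]
    have hG : DiffContOnCl ℂ (fun z => F (r * z)) (ball 0 1) :=
      (hF.comp (differentiable_id.const_mul _).differentiableOn hmaps).diffContOnCl_ball subset_rfl
    exact (posSemidef_pickKernel_of_diffContOnCl hG
      (fun z hz => hF1 _ (hmaps (sphere_subset_closedBall hz))) a ha).dotProduct_mulVec_nonneg v
  have hFdilate : ∀ k, Tendsto (fun r : ℝ => F (r * a k)) (𝓝[<] 1) (𝓝 (F (a k))) := by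
    intro k
    have hmul : Tendsto (fun r : ℝ => (r : ℂ) * a k) (𝓝[<] 1) (𝓝 (a k)) :=
      ((Complex.continuous_ofReal.mul continuous_const).tendsto' 1 (a k) (by simp)).mono_left
        nhdsWithin_le_nhds
    exact (hF.differentiableAt (isOpen_ball.mem_nhds (ha k))).continuousAt.tendsto.comp hmul
  have hQ : Continuous Q :=
    continuous_const.dotProduct (continuous_id.matrix_mulVec continuous_const)
  refine ge_of_tendsto
    ((hQ.tendsto _).comp (tendsto_pi_nhds.2 fun i => tendsto_pi_nhds.2 fun j => ?_))
    (Filter.mem_of_superset (Ioo_mem_nhdsLT (by norm_num : (0 : ℝ) < 1)) hdilate)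
  exact (tendsto_const_nhds.sub ((hFdilate j).mul
    ((Complex.continuous_conj.tendsto _).comp (hFdilate i)))).div_const _

def cayley (z : ℂ) : ℂ := (z - 1) / (z + 1)

def cayleyInv (ζ : ℂ) : ℂ := (1 + ζ) / (1 - ζ)

theorem add_one_ne_zero_of_re_nonneg {z : ℂ} (hz : 0 ≤ z.re) : z + 1 ≠ 0 := by
  intro h
  have := congrArg Complex.re h
  simp only [Complex.add_re, Complex.one_re, Complex.zero_re] at this
  linarith

theorem norm_cayley_le_one {z : ℂ} (hz : 0 ≤ z.re) : ‖cayley z‖ ≤ 1 := by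
  rw [cayley, norm_div, div_le_one (norm_pos_iff.mpr (add_one_ne_zero_of_re_nonneg hz)),
    Complex.norm_def, Complex.norm_def]
  apply Real.sqrt_le_sqrt
  simp only [Complex.normSq_apply, Complex.sub_re, Complex.add_re, Complex.sub_im,
    Complex.add_im, Complex.one_re, Complex.one_im]
  nlinarith

theorem cayley_mem_ball {z : ℂ} (hz : 0 < z.re) : cayley z ∈ ball (0 : ℂ) 1 := by
  rw [mem_ball_zero_iff, cayley, norm_div,
    div_lt_one (norm_pos_iff.mpr (add_one_ne_zero_of_re_nonneg hz.le)),
    Complex.norm_def, Complex.norm_def]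
  apply Real.sqrt_lt_sqrt (Complex.normSq_nonneg _)
  simp only [Complex.normSq_apply, Complex.sub_re, Complex.add_re, Complex.sub_im,
    Complex.add_im, Complex.one_re, Complex.one_im]
  nlinarith

theorem one_sub_ne_zero_of_mem_ball {ζ : ℂ} (hζ : ζ ∈ ball (0 : ℂ) 1) : 1 - ζ ≠ 0 := by
  rw [sub_ne_zero]
  rintro rfl
  simp at hζ

theorem cayleyInv_mem_Hs {ζ : ℂ} (hζ : ζ ∈ ball (0 : ℂ) 1) : cayleyInv ζ ∈ Hs := by
  have hζ1 : Complex.normSq ζ < 1 := by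
    rw [← Complex.sq_norm]; nlinarith [norm_nonneg ζ, mem_ball_zero_iff.mp hζ]
  have hpos : 0 < Complex.normSq (1 - ζ) :=
    Complex.normSq_pos.mpr (one_sub_ne_zero_of_mem_ball hζ)
  show 0 < (cayleyInv ζ).re
  rw [cayleyInv, Complex.div_re, ← add_div]
  apply div_pos _ hpos
  rw [Complex.normSq_apply] at hζ1
  simp only [Complex.add_re, Complex.add_im, Complex.sub_re, Complex.sub_im, Complex.one_re,
    Complex.one_im]
  nlinarith

theorem cayleyInv_cayley {z : ℂ} (hz : z + 1 ≠ 0) : cayleyInv (cayley z) = z := by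
  rw [cayleyInv, cayley]
  field_simp
  ring

theorem differentiableOn_cayleyInv : DifferentiableOn ℂ cayleyInv (ball 0 1) := fun _ hζ =>
  ((differentiableAt_id.const_add 1).div (differentiableAt_id.const_sub 1)
    (one_sub_ne_zero_of_mem_ball hζ)).differentiableWithinAt

theorem add_conj_div_add_conj_eq_cayley {z w p q : ℂ} (hz : z + 1 ≠ 0) (hw : w + 1 ≠ 0)
    (hp : p + 1 ≠ 0) (hq : q + 1 ≠ 0) (hzw : z + conj w ≠ 0) :
    (p + conj q) / (z + conj w)
      = (1 - cayley p * conj (cayley q)) / (1 - cayley z * conj (cayley w))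
        * ((p + 1) / (z + 1) * conj ((q + 1) / (w + 1))) := by
  have hw' : conj w + 1 ≠ 0 := by simpa using (map_ne_zero conj).mpr hw
  have hq' : conj q + 1 ≠ 0 := by simpa using (map_ne_zero conj).mpr hq
  have hcayley {a b : ℂ} (ha : a + 1 ≠ 0) (hb : b + 1 ≠ 0) :
      1 - cayley a * cayley b = 2 * (a + b) / ((a + 1) * (b + 1)) := by
    rw [cayley, cayley]; field_simp; ring
  have hconj (a : ℂ) : conj (cayley a) = cayley (conj a) := by simp [cayley]
  rw [hconj, hconj, hcayley hz hw', hcayley hp hq']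
  simp only [map_div₀, map_add, map_one]
  field_simp

theorem add_conj_ne_zero {w z : ℂ} (hw : w ∈ Hs) (hz : z ∈ Hs) : z + conj w ≠ 0 := by
  intro h
  have := congrArg Complex.re h
  simp only [Complex.add_re, Complex.conj_re, Complex.zero_re] at this
  have : 0 < z.re + w.re := add_pos hz hw
  linarith

theorem posKernel_of_re_nonneg {ψ : ℂ → ℂ} (hψ : DifferentiableOn ℂ ψ Hs)
    (hψre : ∀ z ∈ Hs, 0 ≤ (ψ z).re) :
    PosKernel (fun w z => (ψ z + conj (ψ w)) / (z + conj w)) := by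
  set F := fun ζ => cayley (ψ (cayleyInv ζ))
  have hmaps : MapsTo cayleyInv (ball 0 1) Hs := fun ζ hζ => cayleyInv_mem_Hs hζ
  have hF : DifferentiableOn ℂ F (ball 0 1) := by
    have hψc := hψ.comp differentiableOn_cayleyInv hmaps
    exact (hψc.sub_const 1).div (hψc.add_const 1) fun ζ hζ =>
      add_one_ne_zero_of_re_nonneg (hψre _ (hmaps hζ))
  have hF1 : ∀ ζ ∈ ball (0 : ℂ) 1, ‖F ζ‖ ≤ 1 := fun ζ hζ =>
    norm_cayley_le_one (hψre _ (hmaps hζ))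
  have hFcayley : ∀ z ∈ Hs, F (cayley z) = cayley (ψ z) := fun z hz => by
    simp only [F, cayleyInv_cayley (add_one_ne_zero_of_re_nonneg (le_of_lt hz))]
  rw [posKernel_iff_posSemidef]
  intro n x hx
  set e : Fin n → ℂ := fun i => (ψ (x i) + 1) / (x i + 1)
  have hfactor : (Matrix.of fun i j => (ψ (x j) + conj (ψ (x i))) / (x j + conj (x i)))
      = (Matrix.diagonal e)ᴴ * Matrix.of (fun i j => pickKernel F (cayley (x i)) (cayley (x j)))
        * Matrix.diagonal e := by
    ext i j
    simp only [Matrix.diagonal_conjTranspose, Matrix.mul_diagonal, Matrix.diagonal_mul,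
      Matrix.of_apply, pickKernel, hFcayley _ (hx i), hFcayley _ (hx j), Pi.star_apply,
      RCLike.star_def, e]
    have hHs {z : ℂ} (hz : z ∈ Hs) : z + 1 ≠ 0 := add_one_ne_zero_of_re_nonneg (le_of_lt hz)
    have hψ1 {z : ℂ} (hz : z ∈ Hs) : ψ z + 1 ≠ 0 := add_one_ne_zero_of_re_nonneg (hψre z hz)
    rw [add_conj_div_add_conj_eq_cayley (hHs (hx j)) (hHs (hx i)) (hψ1 (hx j)) (hψ1 (hx i))
      (add_conj_ne_zero (hx i) (hx j))]
    ring
  rw [hfactor]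
  exact (posSemidef_pickKernel hF hF1 _ fun i => cayley_mem_ball (hx i)).conjTranspose_mul_mul_same
    _

theorem Kn_one (φ : ℂ → ℂ) (lam : ℝ) :
    Kn φ lam 1 = fun w z => ((φ z - z / lam) + conj (φ w - w / lam)) / (z + conj w) := by
  funext w z
  simp only [Kn, pow_one, map_sub, map_div₀, Complex.conj_ofReal]
  ring

theorem Kn_two_mul (φ : ℂ → ℂ) (lam : ℝ) (m : ℕ) :
    Kn φ lam (2 * m)
      = fun w z => Kn φ lam m w z * Kn φ lam m w z + 2 * ((lam : ℂ) ^ m)⁻¹ * Kn φ lam m w z := by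
  funext w z
  have hc : ((lam : ℂ) ^ (2 * m))⁻¹ = (((lam : ℂ) ^ m)⁻¹) ^ 2 := by rw [pow_mul', inv_pow]
  simp only [Kn]
  rw [hc, pow_mul' (φ z + conj (φ w)), pow_mul' (z + conj w)]
  generalize (φ z + conj (φ w)) ^ m = X
  generalize (z + conj w) ^ m = Y
  generalize ((lam : ℂ) ^ m)⁻¹ = c
  rcases eq_or_ne Y 0 with rfl | hY
  · simp
  · field_simp
    ring

theorem posKernel_Kn_one {φ : ℂ → ℂ} (hφd : DifferentiableOn ℂ φ Hs) (hφm : MapsTo φ Hs Hs)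
    {lam : ℝ} (hlam : 0 < lam) (hbound : ∀ z ∈ Hs, z.re / (φ z).re ≤ lam) :
    PosKernel (Kn φ lam 1) := by
  rw [Kn_one]
  refine posKernel_of_re_nonneg (hφd.sub (differentiableOn_id.div_const _)) fun z hz => ?_
  have hφz : 0 < (φ z).re := hφm hz
  have := (div_le_iff₀ hφz).mp (hbound z hz)
  rw [Complex.sub_re, Complex.div_ofReal_re, sub_nonneg, div_le_iff₀ hlam]
  linarith

/-- If `φ : H → H` is holomorphic with finite angular derivative `0 < λ < ∞` at
infinity (i.e. `λ = sup Re z / Re φ(z)`), then `K^(2ⁿ)` is positive for every `n`. -/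
theorem K_pow_two_pos (φ : ℂ → ℂ) (hφd : DifferentiableOn ℂ φ Hs) (hφm : MapsTo φ Hs Hs)
    (lam : ℝ) (hlam : 0 < lam)
    (hsup : IsLUB {r | ∃ z ∈ Hs, r = z.re / (φ z).re} lam) :
    ∀ n : ℕ, PosKernel (Kn φ lam (2^n)) := by
  intro n
  induction n with
  | zero => exact posKernel_Kn_one hφd hφm hlam fun z hz => hsup.1 ⟨z, hz, rfl⟩
  | succ k ih =>
    have hc : (0 : ℂ) ≤ 2 * ((lam : ℂ) ^ 2 ^ k)⁻¹ := by
      exact_mod_cast Complex.zero_le_real.mpr (by positivity : (0 : ℝ) ≤ 2 * (lam ^ 2 ^ k)⁻¹)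
    rw [pow_succ', Kn_two_mul]
    exact (ih.mul ih).add (ih.const_mul hc)
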